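/- Let β : ℤ^m → ℤ^d be a homomorphism of abelian groups with finite cokernel. Then the kernel of the induced map β̄ : (ℝ/ℤ)^m → (ℝ/ℤ)^d is isomorphic, as an abelian group, to the group Hom(coker β*, ℝ/ℤ) of homomorphisms from the cokernel of the dual map β* into ℝ/ℤ. -/
import Mathlib


lemma single_eq_smul_aux {n : ℕ} (j : Fin n) (c : ℤ) :
    (Pi.single j c : Fin n → ℤ) = c • (Pi.single j 1 : Fin n → ℤ) := by
  funext k
  simp [Pi.single_apply, mul_ite]

lemma hom_eq_sum_aux {n : ℕ} {M : Type*} [AddCommGroup M] (g : (Fin n → ℤ) →+ M)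
    (a : Fin n → ℤ) : g a = ∑ j, a j • g (Pi.single j 1) := by
  have ha : a = ∑ j, (Pi.single j (a j) : Fin n → ℤ) := by
    funext k
    simp [Pi.single_apply, Finset.sum_apply]
  conv_lhs => rw [ha]
  rw [map_sum]
  congr 1
  funext j
  rw [single_eq_smul_aux, map_zsmul]

/-- The homomorphism `(ℝ/ℤ)^m → (ℝ/ℤ)^d` induced by a homomorphism `β : ℤ^m → ℤ^d`
(i.e. the map induced on the quotient tori by the ℝ-linear extension of `β`). -/
noncomputable def inducedTorusMap {m d : ℕ} (β : (Fin m → ℤ) →+ (Fin d → ℤ)) :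
    (Fin m → AddCircle (1 : ℝ)) →+ (Fin d → AddCircle (1 : ℝ)) :=
  AddMonoidHom.mk' (fun x i => ∑ j, β (Pi.single j 1) i • x j) (by
    intro x y
    funext i
    simp [smul_add, Finset.sum_add_distrib])

/-- The dual map `β* : Hom(ℤ^d, ℤ) → Hom(ℤ^m, ℤ)`, `f ↦ f ∘ β`. -/
def dualHom {m d : ℕ} (β : (Fin m → ℤ) →+ (Fin d → ℤ)) :
    ((Fin d → ℤ) →+ ℤ) →+ ((Fin m → ℤ) →+ ℤ) :=
  AddMonoidHom.mk' (fun f => f.comp β) (by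
    intro f g
    ext x
    simp)

/-- forward map on an element of the kernel -/
noncomputable def kerToHom {m d : ℕ} (β : (Fin m → ℤ) →+ (Fin d → ℤ))
    (x : (inducedTorusMap β).ker) :
    (((Fin m → ℤ) →+ ℤ) ⧸ (dualHom β).range) →+ AddCircle (1 : ℝ) :=
  QuotientAddGroup.lift _
    (AddMonoidHom.mk' (fun f => ∑ j, f (Pi.single j 1) • (x.1 j)) (by
      intro f g
      simp [add_zsmul, Finset.sum_add_distrib]))
    (by
      rintro _ ⟨h, rfl⟩
      have hx : ∀ i, ∑ j, β (Pi.single j 1) i • x.1 j = 0 := by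
        intro i
        have := x.2
        rw [AddMonoidHom.mem_ker] at this
        exact congrFun this i
      show ∑ j, (h.comp β) (Pi.single j 1) • x.1 j = 0
      have key : ∀ j : Fin m, (h.comp β) (Pi.single j 1) • x.1 j
          = ∑ i, h (Pi.single i 1) • (β (Pi.single j 1) i • x.1 j) := by
        intro j
        rw [show (h.comp β) (Pi.single j 1) = h (β (Pi.single j 1)) from rfl,
          hom_eq_sum_aux h (β (Pi.single j 1)), Finset.sum_smul]
        congr 1
        funext i
        rw [smul_eq_mul, mul_comm, mul_smul]
      calc ∑ j, (h.comp β) (Pi.single j 1) • x.1 j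
          = ∑ j, ∑ i, h (Pi.single i 1) • (β (Pi.single j 1) i • x.1 j) :=
            Finset.sum_congr rfl fun j _ => key j
        _ = ∑ i, h (Pi.single i 1) • ∑ j, β (Pi.single j 1) i • x.1 j := by
            rw [Finset.sum_comm]
            exact Finset.sum_congr rfl fun i _ => (Finset.smul_sum).symm
        _ = 0 := by simp [hx])

/-- For `β : ℤ^m → ℤ^d` with finite cokernel, the kernel of the induced torus map
`β̄ : (ℝ/ℤ)^m → (ℝ/ℤ)^d` is isomorphic, as an abelian group, to
`Hom(coker β*, ℝ/ℤ)`. -/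
theorem kernel_torusMap_iso_hom_coker_dual {m d : ℕ}
    (β : (Fin m → ℤ) →+ (Fin d → ℤ))
    (hfin : Finite ((Fin d → ℤ) ⧸ β.range)) :
    Nonempty (((inducedTorusMap β).ker) ≃+
      (((((Fin m → ℤ) →+ ℤ) ⧸ (dualHom β).range)) →+ AddCircle (1 : ℝ))) := by
  classical
  set projm : Fin m → ((Fin m → ℤ) →+ ℤ) := fun j => Pi.evalAddMonoidHom (fun _ => ℤ) j
    with hprojm
  set projd : Fin d → ((Fin d → ℤ) →+ ℤ) := fun i => Pi.evalAddMonoidHom (fun _ => ℤ) i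
    with hprojd
  set mk : ((Fin m → ℤ) →+ ℤ) →+ (((Fin m → ℤ) →+ ℤ) ⧸ (dualHom β).range) :=
    QuotientAddGroup.mk' (dualHom β).range with hmk
  -- key: ∑ j, (f δ_j) • projm j = f for any f
  have hdecomp : ∀ f : (Fin m → ℤ) →+ ℤ, (∑ j, f (Pi.single j 1) • projm j) = f := by
    intro f
    refine AddMonoidHom.ext fun a => ?_
    rw [AddMonoidHom.finset_sum_apply, hom_eq_sum_aux f a]
    simp only [AddMonoidHom.smul_apply, smul_eq_mul]
    exact Finset.sum_congr rfl fun j _ => mul_comm _ _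
  have mem : ∀ G : (((Fin m → ℤ) →+ ℤ) ⧸ (dualHom β).range) →+ AddCircle (1 : ℝ),
      (fun j => G (mk (projm j))) ∈ (inducedTorusMap β).ker := by
    intro G
    rw [AddMonoidHom.mem_ker]
    funext i
    show ∑ j, β (Pi.single j 1) i • G (mk (projm j)) = 0
    have h1 : ∑ j, β (Pi.single j 1) i • G (mk (projm j))
        = (G.comp mk) (∑ j, β (Pi.single j 1) i • projm j) := by
      rw [map_sum]
      exact Finset.sum_congr rfl fun j _ => (map_zsmul (G.comp mk) _ _).symm
    rw [h1]
    have hrange : (∑ j, β (Pi.single j 1) i • projm j) = dualHom β (projd i) := by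
      refine AddMonoidHom.ext fun a => ?_
      rw [AddMonoidHom.finset_sum_apply]
      have h2 : (dualHom β (projd i)) a = β a i := rfl
      rw [h2, hom_eq_sum_aux β a]
      simp only [AddMonoidHom.smul_apply, smul_eq_mul, Finset.sum_apply, Pi.smul_apply]
      exact Finset.sum_congr rfl fun j _ => mul_comm _ _
    rw [hrange]
    have : mk (dualHom β (projd i)) = 0 :=
      (QuotientAddGroup.eq_zero_iff _).2 ⟨projd i, rfl⟩
    rw [AddMonoidHom.comp_apply, this, map_zero]
  refine ⟨{ toFun := kerToHom β
            invFun := fun G => ⟨fun j => G (mk (projm j)), mem G⟩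
            left_inv := ?_
            right_inv := ?_
            map_add' := ?_ }⟩
  · intro x
    ext j
    show kerToHom β x (mk (projm j)) = x.1 j
    show ∑ k, projm j (Pi.single k 1) • x.1 k = x.1 j
    simp [hprojm, Pi.single_apply]
  · intro G
    refine AddMonoidHom.ext fun q => ?_
    induction q using QuotientAddGroup.induction_on with
    | H f =>
      show ∑ j, f (Pi.single j 1) • G (mk (projm j)) = G (mk f)
      have h1 : ∑ j, f (Pi.single j 1) • G (mk (projm j))
          = (G.comp mk) (∑ j, f (Pi.single j 1) • projm j) := by
        rw [map_sum]
        exact Finset.sum_congr rfl fun j _ => (map_zsmul (G.comp mk) _ _).symm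
      rw [h1, hdecomp f]
      rfl
  · intro x y
    refine AddMonoidHom.ext fun q => ?_
    induction q using QuotientAddGroup.induction_on with
    | H f =>
      show ∑ j, f (Pi.single j 1) • (x.1 j + y.1 j)
        = (kerToHom β x + kerToHom β y) (mk f)
      simp only [smul_add, Finset.sum_add_distrib]
      rfl
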